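/- Let ρ be a density matrix on ℂ^{d_S} with spectral decomposition ρ = Σ_j r_j |r_j⟩⟨r_j|, r_1 ≥ r_2 ≥ ... ≥ r_{d_S}. Then the ergotropy satisfies ℰ(ρ) = max over unitaries U of (Tr(H_S ρ) − Tr(H_S U ρ U†)) = Σ_{k,j} r_j (|⟨ε_k|r_j⟩|² − δ_{jk}) ε_k ≥ 0, and the maximum is attained by any unitary of the form U = Σ_k e^{iφ_k} |ε_k⟩⟨r_k|. -/

import Mathlib

/-! Writing `ρ = ∑ⱼ rⱼ |rⱼ⟩⟨rⱼ|`, the energy of `UρU†` is `∑ₖⱼ εₖ Bₖⱼ rⱼ` with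
`Bₖⱼ = |⟨εₖ|U rⱼ⟩|²`, and `B` is doubly stochastic since it comes from a unitary matrix.
By Birkhoff's theorem `B` is a convex combination of permutation matrices, and for each
permutation the rearrangement inequality (`ε` increasing, `r` decreasing) bounds the energy
below by `∑ₖ εₖ rₖ`. A unitary sending each `|rₖ⟩` to a phase times `|εₖ⟩` makes `B = 1` and
attains this bound; taking `U = 1` shows that the ergotropy is nonnegative. -/

open Matrix BigOperators Finset Kronecker
open scoped ComplexOrder

noncomputable section

namespace Daemonic

/-- The outer product `|x⟩⟨y|` as a matrix. -/
def ketbra {ι : Type*} [Fintype ι] (x y : ι → ℂ) : Matrix ι ι ℂ :=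
  Matrix.vecMulVec x (star y)

/-- A family of vectors is orthonormal. -/
def ONFam {ι κ : Type*} [Fintype ι] [DecidableEq κ] (v : κ → ι → ℂ) : Prop :=
  ∀ i j, star (v i) ⬝ᵥ v j = if i = j then 1 else 0

/-- A density matrix: positive semidefinite with unit trace. -/
def IsDensity {ι : Type*} [Fintype ι] (ρ : Matrix ι ι ℂ) : Prop :=
  ρ.PosSemidef ∧ ρ.trace = 1

/-- The matrix element `⟨x|M|y⟩`. -/
def matElem {ι : Type*} [Fintype ι] (M : Matrix ι ι ℂ) (x y : ι → ℂ) : ℂ :=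
  star x ⬝ᵥ (M *ᵥ y)

/-- The Hamiltonian `H_S = ∑ₖ εₖ |εₖ⟩⟨εₖ|`. -/
def ham {n : ℕ} (ε : Fin n → ℝ) (v : Fin n → Fin n → ℂ) : Matrix (Fin n) (Fin n) ℂ :=
  ∑ k, (ε k : ℂ) • ketbra (v k) (v k)

/-- `e^{t H_S} = ∑ₖ e^{t εₖ} |εₖ⟩⟨εₖ|` (functional calculus in the eigenbasis of `H_S`). -/
def expHam {n : ℕ} (ε : Fin n → ℝ) (v : Fin n → Fin n → ℂ) (t : ℝ) :
    Matrix (Fin n) (Fin n) ℂ :=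
  ∑ k, (Real.exp (t * ε k) : ℂ) • ketbra (v k) (v k)

/-- The expected utility `⟨u(w)⟩_{ρ,U}` for quasiprobability parameter `q`,
with respect to the eigenvalues `ε` and orthonormal eigenvectors `v` of `H_S`. -/
def expUtil {n : ℕ} (u : ℝ → ℝ) (q : ℝ) (ε : Fin n → ℝ) (v : Fin n → Fin n → ℂ)
    (ρ U : Matrix (Fin n) (Fin n) ℂ) : ℝ :=
  ∑ i, ∑ j, ∑ k,
    (matElem ρ (v i) (v j) * matElem Uᴴ (v j) (v k) * matElem U (v k) (v i)).re *
      u (q * ε i + (1 - q) * ε j - ε k)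

/-- The optimal expected utility `𝓤(ρ) = max over unitaries U of ⟨u(w)⟩_{ρ,U}`. -/
def optUtil {n : ℕ} (u : ℝ → ℝ) (q : ℝ) (ε : Fin n → ℝ) (v : Fin n → Fin n → ℂ)
    (ρ : Matrix (Fin n) (Fin n) ℂ) : ℝ :=
  ⨆ U : Matrix.unitaryGroup (Fin n) ℂ, expUtil u q ε v ρ (U : Matrix (Fin n) (Fin n) ℂ)

/-- The exponential utility `u(w) = (1 - e^{-r w})/r`. -/
def expUtility (r : ℝ) : ℝ → ℝ := fun w => (1 - Real.exp (-r * w)) / r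

/-- The partial trace over the ancilla. -/
def ptraceA {dS dA : ℕ} (ρSA : Matrix (Fin dS × Fin dA) (Fin dS × Fin dA) ℂ) :
    Matrix (Fin dS) (Fin dS) ℂ :=
  Matrix.of fun i j => ∑ a, ρSA (i, a) (j, a)

/-- The unnormalized conditional state `Tr_A((I ⊗ Π_a) ρ_SA (I ⊗ Π_a))`, where
`Π_a = |a⟩⟨a|` projects onto the vector `w a` of an orthonormal basis `w` of the ancilla. -/
def condUnnorm {dS dA : ℕ} (w : Fin dA → Fin dA → ℂ)
    (ρSA : Matrix (Fin dS × Fin dA) (Fin dS × Fin dA) ℂ) (a : Fin dA) :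
    Matrix (Fin dS) (Fin dS) ℂ :=
  Matrix.of fun i j => ∑ c, ∑ d, ρSA (i, c) (j, d) * (w a d * star (w a c))

/-- The outcome probability `p_a = Tr((I ⊗ Π_a) ρ_SA)`. -/
def prob {dS dA : ℕ} (w : Fin dA → Fin dA → ℂ)
    (ρSA : Matrix (Fin dS × Fin dA) (Fin dS × Fin dA) ℂ) (a : Fin dA) : ℝ :=
  ((condUnnorm w ρSA a).trace).re

/-- The conditional state `ρ_{S|a}`. -/
def condState {dS dA : ℕ} (w : Fin dA → Fin dA → ℂ)
    (ρSA : Matrix (Fin dS × Fin dA) (Fin dS × Fin dA) ℂ) (a : Fin dA) :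
    Matrix (Fin dS) (Fin dS) ℂ :=
  ((prob w ρSA a : ℂ))⁻¹ • condUnnorm w ρSA a

/-- The daemonic expected utility `𝓤_{{Π_a}}(ρ_SA) = ∑_a p_a 𝓤(ρ_{S|a})`. -/
def daemonicUtil {dS dA : ℕ} (u : ℝ → ℝ) (q : ℝ) (ε : Fin dS → ℝ)
    (v : Fin dS → Fin dS → ℂ) (w : Fin dA → Fin dA → ℂ)
    (ρSA : Matrix (Fin dS × Fin dA) (Fin dS × Fin dA) ℂ) : ℝ :=
  ∑ a, prob w ρSA a * optUtil u q ε v (condState w ρSA a)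

/-- The maximum daemonic gain `δ𝓤(ρ_SA)`, maximizing over all orthonormal bases of the
ancilla (equivalently, over the rows of all unitary matrices). -/
def daemonicGain {dS dA : ℕ} (u : ℝ → ℝ) (q : ℝ) (ε : Fin dS → ℝ)
    (v : Fin dS → Fin dS → ℂ)
    (ρSA : Matrix (Fin dS × Fin dA) (Fin dS × Fin dA) ℂ) : ℝ :=
  (⨆ V : Matrix.unitaryGroup (Fin dA) ℂ,
      daemonicUtil u q ε v (fun a => (V : Matrix (Fin dA) (Fin dA) ℂ) a) ρSA) -
    optUtil u q ε v (ptraceA ρSA)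

/-- The ergotropy of a (possibly unnormalized) state `σ` with respect to a Hamiltonian `H`:
`ℰ_H(σ) = max over unitaries U of (Tr(Hσ) - Tr(H U σ U†))`. -/
def ergotropyH {n : ℕ} (H σ : Matrix (Fin n) (Fin n) ℂ) : ℝ :=
  ⨆ U : Matrix.unitaryGroup (Fin n) ℂ,
    ((H * σ).trace -
      (H * ((U : Matrix (Fin n) (Fin n) ℂ) * σ * (U : Matrix (Fin n) (Fin n) ℂ)ᴴ)).trace).re

/-- A separable bipartite state: a convex combination of product states. -/
def IsSeparable {dS dA : ℕ} (ρSA : Matrix (Fin dS × Fin dA) (Fin dS × Fin dA) ℂ) : Prop :=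
  ∃ (m : ℕ) (p : Fin m → ℝ) (σ : Fin m → Matrix (Fin dS) (Fin dS) ℂ)
    (τ : Fin m → Matrix (Fin dA) (Fin dA) ℂ),
    (∀ k, 0 ≤ p k) ∧ (∑ k, p k = 1) ∧ (∀ k, IsDensity (σ k)) ∧ (∀ k, IsDensity (τ k)) ∧
    ρSA = ∑ k, (p k : ℂ) • (σ k ⊗ₖ τ k)

/-- A classical-quantum state `ρ_SA = ∑ₖ pₖ Pₖ ⊗ ρᴬₖ` with `Pₖ` mutually orthogonal
rank-one projectors summing to the identity. -/
def IsClassicalQuantum {dS dA : ℕ}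
    (ρSA : Matrix (Fin dS × Fin dA) (Fin dS × Fin dA) ℂ) : Prop :=
  ∃ (p : Fin dS → ℝ) (ψ : Fin dS → Fin dS → ℂ) (τ : Fin dS → Matrix (Fin dA) (Fin dA) ℂ),
    (∀ k, 0 ≤ p k) ∧ (∑ k, p k = 1) ∧ ONFam ψ ∧ (∀ k, IsDensity (τ k)) ∧
    ρSA = ∑ k, (p k : ℂ) • (ketbra (ψ k) (ψ k) ⊗ₖ τ k)

/-- The dephasing map associated with an orthonormal basis `v`. -/
def dephase {n : ℕ} (v : Fin n → Fin n → ℂ) (ρ : Matrix (Fin n) (Fin n) ℂ) :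
    Matrix (Fin n) (Fin n) ℂ :=
  ∑ k, ketbra (v k) (v k) * ρ * ketbra (v k) (v k)

section Rearrangement

variable {R ι : Type*} [Field R] [LinearOrder R] [IsStrictOrderedRing R]
  [Fintype ι] [DecidableEq ι]

theorem dotProduct_le_dotProduct_mulVec_of_antivary {a b : ι → R} (hab : Antivary a b)
    {B : Matrix ι ι R} (hB : B ∈ doublyStochastic R ι) : a ⬝ᵥ b ≤ a ⬝ᵥ (B *ᵥ b) := by
  obtain ⟨w, hw_nonneg, hw_sum, rfl⟩ := exists_eq_sum_perm_of_mem_doublyStochastic hB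
  calc a ⬝ᵥ b = ∑ σ, w σ * (a ⬝ᵥ b) := by rw [← Finset.sum_mul, hw_sum, one_mul]
    _ ≤ ∑ σ, w σ * (a ⬝ᵥ (σ.permMatrix R *ᵥ b)) := by
        gcongr with σ
        · exact hw_nonneg σ
        · rw [permMatrix_mulVec]
          exact hab.sum_mul_le_sum_mul_comp_perm
    _ = a ⬝ᵥ ((∑ σ, w σ • σ.permMatrix R) *ᵥ b) := by
        simp only [Matrix.sum_mulVec, dotProduct_sum, smul_mulVec, dotProduct_smul, smul_eq_mul]

end Rearrangement

section Orthonormal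

variable {ι : Type*} [Fintype ι] [DecidableEq ι]

theorem normSq_mem_doublyStochastic {U : Matrix ι ι ℂ} (hU : U ∈ unitaryGroup ι ℂ) :
    (of fun i j => Complex.normSq (U i j)) ∈ doublyStochastic ℝ ι := by
  have hrow (i : ι) : ∑ j, Complex.normSq (U i j) = 1 := by
    have h := congrArg Complex.re (congrFun (congrFun (mem_unitaryGroup_iff.mp hU) i) i)
    simpa [star_eq_conjTranspose, mul_apply, Complex.mul_conj, Complex.re_sum] using h
  have hcol (j : ι) : ∑ i, Complex.normSq (U i j) = 1 := by
    have h := congrArg Complex.re (congrFun (congrFun (mem_unitaryGroup_iff'.mp hU) j) j)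
    simpa [star_eq_conjTranspose, mul_apply, Complex.re_sum, Complex.normSq_apply]
      using h
  exact mem_doublyStochastic_iff_sum.mpr ⟨fun _ _ => Complex.normSq_nonneg _, hrow, hcol⟩

theorem onFam_iff_mem_unitaryGroup {v : ι → ι → ℂ} :
    ONFam v ↔ (of v)ᵀ ∈ unitaryGroup ι ℂ := by
  rw [mem_unitaryGroup_iff', ← Matrix.ext_iff, ONFam]
  simp [star_eq_conjTranspose, mul_apply, dotProduct, one_apply]

theorem ONFam.mulVec {w : ι → ι → ℂ} (hw : ONFam w) {U : Matrix ι ι ℂ}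
    (hU : U ∈ unitaryGroup ι ℂ) : ONFam fun j => U *ᵥ w j := by
  have h : (of fun j => U *ᵥ w j)ᵀ = U * (of w)ᵀ := by
    ext i j
    rfl
  rw [onFam_iff_mem_unitaryGroup, h]
  exact mul_mem hU (onFam_iff_mem_unitaryGroup.mp hw)

def transitionMatrix (v w : ι → ι → ℂ) : Matrix ι ι ℝ :=
  of fun k j => Complex.normSq (star (v k) ⬝ᵥ w j)

theorem transitionMatrix_mem_doublyStochastic {v w : ι → ι → ℂ} (hv : ONFam v)
    (hw : ONFam w) : transitionMatrix v w ∈ doublyStochastic ℝ ι := by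
  have h : transitionMatrix v w = of fun k j => Complex.normSq ((((of v)ᵀ)ᴴ * (of w)ᵀ) k j) := by
    ext k j
    simp [transitionMatrix, mul_apply, dotProduct]
  rw [h]
  exact normSq_mem_doublyStochastic <| mul_mem
    (Unitary.star_mem (onFam_iff_mem_unitaryGroup.mp hv)) (onFam_iff_mem_unitaryGroup.mp hw)

theorem transitionMatrix_self {v : ι → ι → ℂ} (hv : ONFam v) : transitionMatrix v v = 1 := by
  ext k j
  simp [transitionMatrix, hv k j, one_apply, apply_ite]

end Orthonormal

section Ketbra

variable {ι : Type*} [Fintype ι]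

def spectralSum (r : ι → ℝ) (w : ι → ι → ℂ) : Matrix ι ι ℂ :=
  ∑ j, (r j : ℂ) • ketbra (w j) (w j)

theorem ketbra_mulVec (x y z : ι → ℂ) : ketbra x y *ᵥ z = (star y ⬝ᵥ z) • x := by
  rw [ketbra, vecMulVec_mulVec, op_smul_eq_smul]

theorem mul_ketbra_mul_conjTranspose (U : Matrix ι ι ℂ) (x y : ι → ℂ) :
    U * ketbra x y * Uᴴ = ketbra (U *ᵥ x) (U *ᵥ y) := by
  rw [ketbra, ketbra, mul_vecMulVec, vecMulVec_mul, star_mulVec]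

theorem ketbra_smul_smul (c : ℂ) (x : ι → ℂ) :
    ketbra (c • x) (c • x) = (Complex.normSq c : ℂ) • ketbra x x := by
  ext i j
  simp only [ketbra, star_smul, vecMulVec_apply, Pi.smul_apply, Matrix.smul_apply, smul_eq_mul,
    Complex.normSq_eq_conj_mul_self, RCLike.star_def]
  ring

theorem trace_ketbra_mul_ketbra (x y : ι → ℂ) :
    (ketbra x x * ketbra y y).trace = Complex.normSq (star x ⬝ᵥ y) := by
  rw [ketbra, ketbra, vecMulVec_mul_vecMulVec, trace_vecMulVec, dotProduct_smul,
    Complex.normSq_eq_conj_mul_self, smul_eq_mul, mul_comm]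
  congr 1
  simp [dotProduct, mul_comm]

theorem conj_spectralSum (U : Matrix ι ι ℂ) (r : ι → ℝ) (w : ι → ι → ℂ) :
    U * spectralSum r w * Uᴴ = spectralSum r fun j => U *ᵥ w j := by
  simp only [spectralSum, Matrix.mul_sum, Matrix.sum_mul, Matrix.mul_smul, Matrix.smul_mul,
    mul_ketbra_mul_conjTranspose]

theorem spectralSum_smul {c : ι → ℂ} (hc : ∀ j, ‖c j‖ = 1) (r : ι → ℝ) (w : ι → ι → ℂ) :
    spectralSum r (fun j => c j • w j) = spectralSum r w := by
  simp [spectralSum, ketbra_smul_smul, Complex.normSq_eq_norm_sq, hc]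

end Ketbra

section PassiveUnitary

variable {ι : Type*} [Fintype ι] [DecidableEq ι]

theorem sum_smul_ketbra_eq (c : ι → ℂ) (v w : ι → ι → ℂ) :
    ∑ k, c k • ketbra (v k) (w k) = (of v)ᵀ * diagonal c * ((of w)ᵀ)ᴴ := by
  ext i j
  rw [mul_apply]
  simp only [ketbra, Matrix.sum_apply, Matrix.smul_apply, vecMulVec_apply, mul_diagonal,
    conjTranspose_apply, transpose_apply, of_apply, Pi.star_apply, smul_eq_mul]
  exact Finset.sum_congr rfl fun k _ => by ring

theorem sum_smul_ketbra_mem_unitaryGroup {v w : ι → ι → ℂ} (hv : ONFam v) (hw : ONFam w)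
    {c : ι → ℂ} (hc : ∀ k, ‖c k‖ = 1) :
    ∑ k, c k • ketbra (v k) (w k) ∈ unitaryGroup ι ℂ := by
  have hdiag : diagonal c ∈ unitaryGroup ι ℂ := by
    rw [mem_unitaryGroup_iff', star_eq_conjTranspose, diagonal_conjTranspose,
      diagonal_mul_diagonal, ← diagonal_one]
    congr 1
    ext k
    simp [Complex.conj_mul', hc k]
  rw [sum_smul_ketbra_eq]
  exact mul_mem (mul_mem (onFam_iff_mem_unitaryGroup.mp hv) hdiag)
    (Unitary.star_mem (onFam_iff_mem_unitaryGroup.mp hw))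

theorem sum_smul_ketbra_mulVec (c : ι → ℂ) (v : ι → ι → ℂ) {w : ι → ι → ℂ} (hw : ONFam w)
    (j : ι) : (∑ k, c k • ketbra (v k) (w k)) *ᵥ w j = c j • v j := by
  simp [Matrix.sum_mulVec, smul_mulVec, ketbra_mulVec, hw _ j]

end PassiveUnitary

section Hamiltonian

variable {n : ℕ}

theorem re_trace_ham_mul_spectralSum (ε r : Fin n → ℝ) (v w : Fin n → Fin n → ℂ) :
    (ham ε v * spectralSum r w).trace.re = ε ⬝ᵥ (transitionMatrix v w *ᵥ r) := by
  simp only [ham, spectralSum, Matrix.sum_mul, Matrix.mul_sum, Matrix.smul_mul, Matrix.mul_smul,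
    trace_sum, trace_smul, trace_ketbra_mul_ketbra, smul_eq_mul, Complex.re_sum]
  simp only [dotProduct, mulVec, transitionMatrix, of_apply, Finset.mul_sum,
    ← Complex.ofReal_mul, ← Complex.ofReal_sum, Complex.ofReal_re]
  rw [Finset.sum_comm]
  exact Finset.sum_congr rfl fun k _ => Finset.sum_congr rfl fun j _ => by ring

theorem dotProduct_le_re_trace_ham_mul_spectralSum {ε r : Fin n → ℝ} (hε : Monotone ε)
    (hr : Antitone r) {v w : Fin n → Fin n → ℂ} (hv : ONFam v) (hw : ONFam w) :
    ε ⬝ᵥ r ≤ (ham ε v * spectralSum r w).trace.re := by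
  rw [re_trace_ham_mul_spectralSum]
  exact dotProduct_le_dotProduct_mulVec_of_antivary (hε.antivary hr)
    (transitionMatrix_mem_doublyStochastic hv hw)

theorem re_trace_ham_mul_spectralSum_self (ε r : Fin n → ℝ) {v : Fin n → Fin n → ℂ}
    (hv : ONFam v) : (ham ε v * spectralSum r v).trace.re = ε ⬝ᵥ r := by
  rw [re_trace_ham_mul_spectralSum, transitionMatrix_self hv, one_mulVec]

end Hamiltonian

theorem stmt19_general {dS : ℕ}
    (ε : Fin dS → ℝ) (hε : StrictMono ε)
    (v : Fin dS → Fin dS → ℂ) (hv : ONFam v)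
    (ρ : Matrix (Fin dS) (Fin dS) ℂ)
    (rval : Fin dS → ℝ) (rvec : Fin dS → Fin dS → ℂ)
    (hrvec : ONFam rvec) (hdec : Antitone rval)
    (hspec : ρ = ∑ j, (rval j : ℂ) • ketbra (rvec j) (rvec j)) :
    IsGreatest {x : ℝ | ∃ U ∈ Matrix.unitaryGroup (Fin dS) ℂ,
        x = ((ham ε v * ρ).trace).re - ((ham ε v * (U * ρ * Uᴴ)).trace).re}
      (∑ k, ∑ j, rval j * (Complex.normSq (star (v k) ⬝ᵥ rvec j) -
        if j = k then 1 else 0) * ε k) ∧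
    0 ≤ ∑ k, ∑ j, rval j * (Complex.normSq (star (v k) ⬝ᵥ rvec j) -
        if j = k then 1 else 0) * ε k ∧
    ∀ φ : Fin dS → ℝ,
      (∑ k, Complex.exp ((φ k : ℂ) * Complex.I) • ketbra (v k) (rvec k))
        ∈ Matrix.unitaryGroup (Fin dS) ℂ ∧
      ((ham ε v * ρ).trace).re -
        ((ham ε v * ((∑ k, Complex.exp ((φ k : ℂ) * Complex.I) • ketbra (v k) (rvec k)) * ρ *
          (∑ k, Complex.exp ((φ k : ℂ) * Complex.I) • ketbra (v k) (rvec k))ᴴ)).trace).re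
      = ∑ k, ∑ j, rval j * (Complex.normSq (star (v k) ⬝ᵥ rvec j) -
          if j = k then 1 else 0) * ε k := by
  replace hspec : ρ = spectralSum rval rvec := hspec
  have hE : ∑ k, ∑ j, rval j * (Complex.normSq (star (v k) ⬝ᵥ rvec j) -
      if j = k then 1 else 0) * ε k = (ham ε v * ρ).trace.re - ε ⬝ᵥ rval := by
    rw [hspec, re_trace_ham_mul_spectralSum]
    simp [dotProduct, mulVec, transitionMatrix, mul_sub, Finset.mul_sum, mul_comm]
  have hbound (U) (hU : U ∈ unitaryGroup (Fin dS) ℂ) :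
      ε ⬝ᵥ rval ≤ (ham ε v * (U * ρ * Uᴴ)).trace.re := by
    rw [hspec, conj_spectralSum]
    exact dotProduct_le_re_trace_ham_mul_spectralSum hε.monotone hdec hv (hrvec.mulVec hU)
  have hphase (φ : Fin dS → ℝ) (k : Fin dS) : ‖Complex.exp ((φ k : ℂ) * Complex.I)‖ = 1 :=
    Complex.norm_exp_ofReal_mul_I (φ k)
  have hpassive (φ : Fin dS → ℝ) :
      (ham ε v * ((∑ k, Complex.exp ((φ k : ℂ) * Complex.I) • ketbra (v k) (rvec k)) * ρ *
        (∑ k, Complex.exp ((φ k : ℂ) * Complex.I) • ketbra (v k) (rvec k))ᴴ)).trace.re =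
        ε ⬝ᵥ rval := by
    simp only [hspec, conj_spectralSum, sum_smul_ketbra_mulVec _ v hrvec,
      spectralSum_smul (hphase φ), re_trace_ham_mul_spectralSum_self ε rval hv]
  have hmem (φ : Fin dS → ℝ) :=
    sum_smul_ketbra_mem_unitaryGroup hv hrvec (hphase φ)
  rw [hE]
  refine ⟨⟨⟨_, hmem 0, by rw [hpassive]⟩, ?_⟩, ?_, fun φ => ⟨hmem φ, by rw [hpassive]⟩⟩
  · rintro x ⟨U, hU, rfl⟩
    linarith [hbound U hU]
  · simpa using hbound 1 (one_mem _)

/-- the ergotropy equals `∑_{k,j} r_j (|⟨ε_k|r_j⟩|² - δ_{jk}) ε_k ≥ 0`, and the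
maximum is attained by any unitary of the form `U = ∑ₖ e^{iφₖ} |εₖ⟩⟨rₖ|`. -/
theorem stmt19 {dS : ℕ}
    (ε : Fin dS → ℝ) (hε : StrictMono ε)
    (v : Fin dS → Fin dS → ℂ) (hv : ONFam v)
    (ρ : Matrix (Fin dS) (Fin dS) ℂ) (hρ : IsDensity ρ)
    (rval : Fin dS → ℝ) (rvec : Fin dS → Fin dS → ℂ)
    (hrvec : ONFam rvec) (hdec : Antitone rval)
    (hspec : ρ = ∑ j, (rval j : ℂ) • ketbra (rvec j) (rvec j)) :
    IsGreatest {x : ℝ | ∃ U ∈ Matrix.unitaryGroup (Fin dS) ℂ,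
        x = ((ham ε v * ρ).trace).re - ((ham ε v * (U * ρ * Uᴴ)).trace).re}
      (∑ k, ∑ j, rval j * (Complex.normSq (star (v k) ⬝ᵥ rvec j) -
        if j = k then 1 else 0) * ε k) ∧
    0 ≤ ∑ k, ∑ j, rval j * (Complex.normSq (star (v k) ⬝ᵥ rvec j) -
        if j = k then 1 else 0) * ε k ∧
    ∀ φ : Fin dS → ℝ,
      (∑ k, Complex.exp ((φ k : ℂ) * Complex.I) • ketbra (v k) (rvec k))
        ∈ Matrix.unitaryGroup (Fin dS) ℂ ∧
      ((ham ε v * ρ).trace).re -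
        ((ham ε v * ((∑ k, Complex.exp ((φ k : ℂ) * Complex.I) • ketbra (v k) (rvec k)) * ρ *
          (∑ k, Complex.exp ((φ k : ℂ) * Complex.I) • ketbra (v k) (rvec k))ᴴ)).trace).re
      = ∑ k, ∑ j, rval j * (Complex.normSq (star (v k) ⬝ᵥ rvec j) -
          if j = k then 1 else 0) * ε k :=
  stmt19_general ε hε v hv ρ rval rvec hrvec hdec hspec

end Daemonic
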